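/- Let r > 0 and K₀ ≥ 0, and let ω be a real-valued function continuous on the closed disk {w ∈ ℂ : |w| ≤ r} and twice continuously differentiable on the open disk {w : |w| < r}, satisfying Δω = 2·sinh(2ω) there and |ω| ≤ K₀ on the closed disk. Then for every w = u + iv with |w| < r, |ω(w)| ≤ (K₀/cosh r)·cosh(√2·u)·cosh(√2·v). In particular, |ω(0)| ≤ K₀/cosh r. -/

import Mathlib

/-- The Euclidean Laplacian of a real-valued function on (an open subset of) `ℂ ≅ ℝ²`:
`Δf = ∂²f/∂x² + ∂²f/∂y²`. -/
noncomputable def laplacian (f : ℂ → ℝ) (z : ℂ) : ℝ :=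
  fderiv ℝ (fun w => fderiv ℝ f w 1) z 1 +
    fderiv ℝ (fun w => fderiv ℝ f w Complex.I) z Complex.I

/-!
Put `F(w) = (K₀ / cosh r) · cosh(√2 re w) · cosh(√2 im w)`. Then `ΔF = 4F`, `F ≥ 0`, and `F ≥ K₀`
on the circle `|w| = r`, where `max((re w)², (im w)²) ≥ r²/2`. If `ω - F` had a positive maximum
on the closed disk, it would be attained at an interior point `z`, where the second-derivative test
along the two coordinate lines gives `Δω(z) ≤ ΔF(z)`; but
`Δω(z) = 2 sinh(2ω(z)) ≥ 4ω(z) > 4F(z) = ΔF(z)`. Hence `ω ≤ F`, and likewise `-ω ≤ F`, because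
`-ω` solves the same equation.
-/

open Filter Topology Real

theorem IsLocalMax.deriv_deriv_nonpos {f : ℝ → ℝ} {a : ℝ} (h : IsLocalMax f a)
    (hf : ContinuousAt f a) : deriv (deriv f) a ≤ 0 := by
  by_contra! hpos
  -- a strict second-derivative test makes `a` also a local minimum, so `f` is locally constant
  have hmin : IsLocalMin f a := isLocalMin_of_deriv_deriv_pos hpos h.deriv_eq_zero hf
  have hconst : f =ᶠ[𝓝 a] fun _ => f a := by
    filter_upwards [h, hmin] with x hle hge using le_antisymm hle hge
  have hderiv : deriv f =ᶠ[𝓝 a] fun _ => 0 := by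
    simpa using hconst.deriv
  simp [hderiv.deriv_eq] at hpos

section Line

variable {E : Type*} [NormedAddCommGroup E] [NormedSpace ℝ E] {f : E → ℝ} {z : E}

theorem ContDiffAt.eventually_hasDerivAt_comp_line (hf : ContDiffAt ℝ 2 f z) (e : E) :
    ∀ᶠ t in 𝓝 (0 : ℝ), HasDerivAt (fun t => f (z + t • e)) (fderiv ℝ f (z + t • e) e) t := by
  have hline : Continuous fun t : ℝ => z + t • e := by fun_prop
  have hnear : ∀ᶠ t in 𝓝 (0 : ℝ), ContDiffAt ℝ 2 f (z + t • e) :=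
    hline.continuousAt.eventually (by simpa using hf.eventually (by simp))
  filter_upwards [hnear] with t ht
  have hℓ : HasDerivAt (fun t : ℝ => z + t • e) e t := by
    simpa using ((hasDerivAt_id t).smul_const e).const_add z
  exact (ht.differentiableAt (by simp)).hasFDerivAt.comp_hasDerivAt t hℓ

theorem ContDiffAt.hasDerivAt_fderiv_comp_line (hf : ContDiffAt ℝ 2 f z) (e : E) :
    HasDerivAt (fun t : ℝ => fderiv ℝ f (z + t • e) e)
      (fderiv ℝ (fun w => fderiv ℝ f w e) z e) 0 := by
  have hD : DifferentiableAt ℝ (fun w => fderiv ℝ f w e) z :=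
    ((hf.fderiv_right (m := 1) (by norm_num)).differentiableAt one_ne_zero).clm_apply
      (differentiableAt_const e)
  have hℓ : HasDerivAt (fun t : ℝ => z + t • e) e 0 := by
    simpa using ((hasDerivAt_id (0 : ℝ)).smul_const e).const_add z
  exact hD.hasFDerivAt.comp_hasDerivAt_of_eq 0 hℓ (by simp)

theorem fderiv_fderiv_apply_le_of_isLocalMax_sub {g : E → ℝ} (hf : ContDiffAt ℝ 2 f z)
    (hg : ContDiffAt ℝ 2 g z) (h : IsLocalMax (fun w => f w - g w) z) (e : E) :
    fderiv ℝ (fun w => fderiv ℝ f w e) z e ≤ fderiv ℝ (fun w => fderiv ℝ g w e) z e := by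
  set φ : ℝ → ℝ := fun t => f (z + t • e) - g (z + t • e)
  have hφ' : ∀ᶠ t in 𝓝 (0 : ℝ),
      HasDerivAt φ (fderiv ℝ f (z + t • e) e - fderiv ℝ g (z + t • e) e) t := by
    filter_upwards [hf.eventually_hasDerivAt_comp_line e, hg.eventually_hasDerivAt_comp_line e]
      with t htf htg using htf.sub htg
  have hmax : IsLocalMax φ 0 :=
    IsLocalMax.comp_continuous (f := fun w => f w - g w) (g := fun t : ℝ => z + t • e) (b := 0)
      (by simpa using h) (by fun_prop)
  have hφ'eq : deriv φ =ᶠ[𝓝 0] _ := hφ'.mono fun t ht => ht.deriv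
  have hφ'' := (hf.hasDerivAt_fderiv_comp_line e).fun_sub (hg.hasDerivAt_fderiv_comp_line e)
  have key := hmax.deriv_deriv_nonpos hφ'.self_of_nhds.continuousAt
  rw [hφ'eq.deriv_eq, hφ''.deriv] at key
  linarith

end Line

theorem laplacian_le_of_isLocalMax_sub {f g : ℂ → ℝ} {z : ℂ} (hf : ContDiffAt ℝ 2 f z)
    (hg : ContDiffAt ℝ 2 g z) (h : IsLocalMax (fun w => f w - g w) z) :
    laplacian f z ≤ laplacian g z :=
  add_le_add (fderiv_fderiv_apply_le_of_isLocalMax_sub hf hg h 1)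
    (fderiv_fderiv_apply_le_of_isLocalMax_sub hf hg h Complex.I)

theorem laplacian_neg (f : ℂ → ℝ) (z : ℂ) :
    laplacian (-f) z = -laplacian f z := by
  simp only [laplacian, fderiv_neg, fderiv_fun_neg, neg_apply]
  ring

theorem hasFDerivAt_re_mul_im {a b : ℝ → ℝ} {a' b' : ℝ} {z : ℂ} (ha : HasDerivAt a a' z.re)
    (hb : HasDerivAt b b' z.im) :
    HasFDerivAt (fun w : ℂ => a w.re * b w.im)
      (a z.re • b' • Complex.imCLM + b z.im • a' • Complex.reCLM) z :=
  (ha.comp_hasFDerivAt z Complex.reCLM.hasFDerivAt).mul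
    (hb.comp_hasFDerivAt z Complex.imCLM.hasFDerivAt)

theorem laplacian_re_mul_im {a a' a'' b b' b'' : ℝ → ℝ} (ha : ∀ x, HasDerivAt a (a' x) x)
    (ha' : ∀ x, HasDerivAt a' (a'' x) x) (hb : ∀ y, HasDerivAt b (b' y) y)
    (hb' : ∀ y, HasDerivAt b' (b'' y) y) (z : ℂ) :
    laplacian (fun w => a w.re * b w.im) z = a'' z.re * b z.im + a z.re * b'' z.im := by
  have hre : (fun w => fderiv ℝ (fun w : ℂ => a w.re * b w.im) w 1) = fun w => a' w.re * b w.im :=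
    funext fun w => by simp [(hasFDerivAt_re_mul_im (ha w.re) (hb w.im)).fderiv, mul_comm]
  have him : (fun w => fderiv ℝ (fun w : ℂ => a w.re * b w.im) w Complex.I) =
      fun w => a w.re * b' w.im :=
    funext fun w => by simp [(hasFDerivAt_re_mul_im (ha w.re) (hb w.im)).fderiv]
  rw [laplacian, hre, him, (hasFDerivAt_re_mul_im (ha' z.re) (hb z.im)).fderiv,
    (hasFDerivAt_re_mul_im (ha z.re) (hb' z.im)).fderiv]
  simp [mul_comm]

theorem laplacian_cosh_mul_cosh (c k : ℝ) (z : ℂ) :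
    laplacian (fun w => c * (cosh (k * w.re) * cosh (k * w.im))) z =
      2 * k ^ 2 * (c * (cosh (k * z.re) * cosh (k * z.im))) := by
  have hcosh (x : ℝ) : HasDerivAt (fun x => cosh (k * x)) (k * sinh (k * x)) x := by
    simpa [mul_comm] using ((hasDerivAt_id x).const_mul k).cosh
  have hsinh (x : ℝ) : HasDerivAt (fun x => k * sinh (k * x)) (k * (k * cosh (k * x))) x := by
    simpa [mul_comm] using (((hasDerivAt_id x).const_mul k).sinh).const_mul k
  have h := laplacian_re_mul_im (fun x => (hcosh x).const_mul c) (fun x => (hsinh x).const_mul c)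
    hcosh hsinh z
  simp only [← mul_assoc] at h ⊢
  rw [h]
  ring

theorem cosh_le_cosh_sqrt_two_mul_mul_cosh {ρ u v : ℝ} (h : ρ ^ 2 ≤ u ^ 2 + v ^ 2) :
    cosh ρ ≤ cosh (√2 * u) * cosh (√2 * v) := by
  wlog huv : v ^ 2 ≤ u ^ 2 generalizing u v
  · rw [mul_comm]
    exact this (by linarith) (by linarith)
  have hu : cosh ρ ≤ cosh (√2 * u) :=
    cosh_le_cosh.2 (sq_le_sq.1 (by rw [mul_pow, sq_sqrt zero_le_two]; linarith))
  exact hu.trans (le_mul_of_one_le_right (cosh_pos _).le (one_le_cosh _))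

theorem le_on_of_laplacian_lt {K : Set ℂ} (hK : IsCompact K) {f g : ℂ → ℝ}
    (hf : ContinuousOn f K) (hg : ContinuousOn g K) (hf₂ : ContDiffOn ℝ 2 f (interior K))
    (hg₂ : ContDiffOn ℝ 2 g (interior K))
    (hlap : ∀ z ∈ interior K, g z < f z → laplacian g z < laplacian f z)
    (hfrontier : ∀ z ∈ frontier K, f z ≤ g z) : ∀ z ∈ K, f z ≤ g z := by
  intro z hz
  by_contra! hgf
  obtain ⟨z₀, hz₀, hmax⟩ := hK.exists_isMaxOn ⟨z, hz⟩ (hf.sub hg)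
  have hgf₀ : g z₀ < f z₀ := by
    have : f z - g z ≤ f z₀ - g z₀ := hmax hz
    linarith
  have hint : z₀ ∈ interior K := by
    by_contra hnot
    exact (hfrontier z₀ ⟨subset_closure hz₀, hnot⟩).not_gt hgf₀
  have hnhds : interior K ∈ 𝓝 z₀ := isOpen_interior.mem_nhds hint
  have hle := laplacian_le_of_isLocalMax_sub (hf₂.contDiffAt hnhds) (hg₂.contDiffAt hnhds)
    (hmax.isLocalMax (mem_interior_iff_mem_nhds.1 hint))
  exact (hlap z₀ hint hgf₀).not_ge hle

open Metric in
theorem le_mul_cosh_mul_cosh_of_laplacian_eq_two_sinh {r K₀ : ℝ} (hr : 0 < r) (hK₀ : 0 ≤ K₀)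
    {ω : ℂ → ℝ} (hcont : ContinuousOn ω (closedBall 0 r)) (hC2 : ContDiffOn ℝ 2 ω (ball 0 r))
    (heq : ∀ w ∈ ball (0 : ℂ) r, laplacian ω w = 2 * sinh (2 * ω w))
    (hbd : ∀ w ∈ sphere (0 : ℂ) r, ω w ≤ K₀) :
    ∀ w ∈ closedBall (0 : ℂ) r, ω w ≤ K₀ / cosh r * (cosh (√2 * w.re) * cosh (√2 * w.im)) := by
  have hF : ContDiff ℝ 2 fun w : ℂ => K₀ / cosh r * (cosh (√2 * w.re) * cosh (√2 * w.im)) := by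
    have hre : ContDiff ℝ 2 fun w : ℂ => w.re := Complex.reCLM.contDiff
    have him : ContDiff ℝ 2 fun w : ℂ => w.im := Complex.imCLM.contDiff
    fun_prop
  set F : ℂ → ℝ := fun w => K₀ / cosh r * (cosh (√2 * w.re) * cosh (√2 * w.im))
  have hF_nonneg (w : ℂ) : 0 ≤ F w := by positivity
  have hΔF (w : ℂ) : laplacian F w = 4 * F w := by
    rw [laplacian_cosh_mul_cosh, sq_sqrt zero_le_two]
    ring
  refine le_on_of_laplacian_lt (isCompact_closedBall 0 r) hcont hF.continuous.continuousOn
    (by rwa [interior_closedBall 0 hr.ne']) hF.contDiffOn (fun w hw hFω => ?_) (fun w hw => ?_)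
  · rw [interior_closedBall 0 hr.ne'] at hw
    have hω : 0 ≤ 2 * ω w := by linarith [hF_nonneg w]
    calc laplacian F w = 4 * F w := hΔF w
      _ < 2 * (2 * ω w) := by linarith
      _ ≤ laplacian ω w := by rw [heq w hw]; linarith [self_le_sinh_iff.2 hω]
  · rw [frontier_closedBall 0 hr.ne'] at hw
    have hw' : r ^ 2 ≤ w.re ^ 2 + w.im ^ 2 := by
      rw [← mem_sphere_zero_iff_norm.1 hw, Complex.sq_norm, Complex.normSq_apply]
      nlinarith
    calc ω w ≤ K₀ := hbd w hw
      _ = K₀ / cosh r * cosh r := by field_simp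
      _ ≤ F w := mul_le_mul_of_nonneg_left (cosh_le_cosh_sqrt_two_mul_mul_cosh hw') (by positivity)

/-- Minsky's comparison argument: a solution of `Δω = 2 sinh(2ω)` on the disk of radius
`r` with `|ω| ≤ K₀` is dominated by `(K₀/cosh r)·cosh(√2 u)·cosh(√2 v)`. -/
theorem stmt4 (r K₀ : ℝ) (hr : 0 < r) (hK₀ : 0 ≤ K₀) (ω : ℂ → ℝ)
    (hcont : ContinuousOn ω {w : ℂ | ‖w‖ ≤ r})
    (hC2 : ContDiffOn ℝ 2 ω {w : ℂ | ‖w‖ < r})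
    (heq : ∀ w : ℂ, ‖w‖ < r → laplacian ω w = 2 * Real.sinh (2 * ω w))
    (hbd : ∀ w : ℂ, ‖w‖ ≤ r → |ω w| ≤ K₀) :
    (∀ w : ℂ, ‖w‖ < r →
      |ω w| ≤ (K₀ / Real.cosh r) * (Real.cosh (Real.sqrt 2 * w.re) *
        Real.cosh (Real.sqrt 2 * w.im))) ∧
      |ω 0| ≤ K₀ / Real.cosh r := by
  have hball : {w : ℂ | ‖w‖ < r} = Metric.ball 0 r := by ext; simp
  have hclosedBall : {w : ℂ | ‖w‖ ≤ r} = Metric.closedBall 0 r := by ext; simp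
  rw [hball] at hC2
  rw [hclosedBall] at hcont
  have heq' (w : ℂ) (hw : w ∈ Metric.ball 0 r) := heq w (mem_ball_zero_iff.1 hw)
  have hbd' (w : ℂ) (hw : w ∈ Metric.sphere 0 r) :=
    abs_le.1 (hbd w (mem_sphere_zero_iff_norm.1 hw).le)
  have hupper := le_mul_cosh_mul_cosh_of_laplacian_eq_two_sinh hr hK₀ hcont hC2 heq'
    fun w hw => (hbd' w hw).2
  have hlower := le_mul_cosh_mul_cosh_of_laplacian_eq_two_sinh hr hK₀ hcont.neg hC2.neg
    (fun w hw => by rw [laplacian_neg, heq' w hw, Pi.neg_apply, mul_neg, sinh_neg, mul_neg])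
    fun w hw => neg_le.1 (hbd' w hw).1
  have hmain (w : ℂ) (hw : ‖w‖ < r) :=
    abs_le.2 ⟨neg_le.1 (hlower w (mem_closedBall_zero_iff.2 hw.le)),
      hupper w (mem_closedBall_zero_iff.2 hw.le)⟩
  exact ⟨hmain, by simpa using hmain 0 (by simpa using hr)⟩
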